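/- arXiv:2210.06448 — 2 statements merged into one kernel-verified Lean document; each statement's English description precedes it below -/
import Mathlib

section
/- With the setup of the pseudo-outcome identity, suppose there is a measurable partition of the domain into sets S1, S2, S3 such that μ(a,w) = μ0(a,w) for (a,w) ∈ S1 ∪ S3 and g(a,w) = g0(a,w) for (a,w) ∈ S2 ∪ S3. Then for almost every a in the relevant range, E[(Y − μ(A,W))/g(A,W) + ∫ μ(A, w̄) dQ0(w̄) | A = a] = θ0(a). (Double robustness: the pseudo-outcome has conditional mean θ0(a) if, at each point, at least one of the two nuisance functions is correct.) -/
/-!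
Conditioning first on `(A, W)` turns the residual `Y - μ(A, W)` into the bias
`μ₀(A, W) - μ(A, W)`; conditioning that on `A` integrates it against the conditional law
`g₀(A, w) dQ₀(w)` of `W`. On the cover `S₁ ∪ S₂ ∪ S₃` one of the errors `μ₀ - μ`, `g₀ - g`
vanishes at every point, so `g₀ (μ₀ - μ) / g = μ₀ - μ`, and the weighted residual has conditional
mean `θ₀(A) - ∫ μ(A, w) dQ₀(w)`, whose second term the plug-in term cancels.
-/

open MeasureTheory

section WithDensity

variable {β : Type*} [MeasurableSpace β] {κ : Measure β} {d₁ d₂ F G : β → ℝ}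

lemma integrable_withDensity_ofReal_congr (hd₁ : Measurable d₁) (hd₂ : Measurable d₂)
    (hFG : ∀ x, max (d₁ x) 0 * F x = max (d₂ x) 0 * G x) :
    Integrable F (κ.withDensity fun x => ENNReal.ofReal (d₁ x)) ↔
      Integrable G (κ.withDensity fun x => ENNReal.ofReal (d₂ x)) := by
  simp only [ENNReal.ofReal, integrable_withDensity_iff_integrable_smul hd₁.real_toNNReal,
    integrable_withDensity_iff_integrable_smul hd₂.real_toNNReal, NNReal.smul_def,
    Real.coe_toNNReal', smul_eq_mul, hFG]

lemma integral_withDensity_ofReal_congr (hd₁ : Measurable d₁) (hd₂ : Measurable d₂)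
    (hFG : ∀ x, max (d₁ x) 0 * F x = max (d₂ x) 0 * G x) :
    ∫ x, F x ∂(κ.withDensity fun x => ENNReal.ofReal (d₁ x)) =
      ∫ x, G x ∂(κ.withDensity fun x => ENNReal.ofReal (d₂ x)) := by
  simp only [ENNReal.ofReal, integral_withDensity_eq_integral_smul hd₁.real_toNNReal,
    integral_withDensity_eq_integral_smul hd₂.real_toNNReal, NNReal.smul_def,
    Real.coe_toNNReal', smul_eq_mul, hFG]

end WithDensity

lemma sub_mul_sub_eq_zero_of_union_eq_univ {X R : Type*} [CommRing R] {u u₀ v v₀ : X → R}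
    {S₁ S₂ S₃ : Set X} (hcover : S₁ ∪ S₂ ∪ S₃ = Set.univ) (hu : ∀ x ∈ S₁ ∪ S₃, u x = u₀ x)
    (hv : ∀ x ∈ S₂ ∪ S₃, v x = v₀ x) (x : X) : (u₀ x - u x) * (v₀ x - v x) = 0 := by
  have hx : x ∈ S₁ ∪ S₂ ∪ S₃ := hcover ▸ Set.mem_univ x
  rcases hx with (h₁ | h₂) | h₃
  · rw [hu x (Or.inl h₁), sub_self, zero_mul]
  · rw [hv x (Or.inl h₂), sub_self, mul_zero]
  · rw [hu x (Or.inr h₃), sub_self, zero_mul]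

lemma max_mul_mul_div_eq_of_mul_sub_eq_zero {f g₀ g r : ℝ} (hg : 0 < g)
    (h : r * (g₀ - g) = 0) : max (f * g₀) 0 * (r / g) = max f 0 * r := by
  rcases mul_eq_zero.1 h with rfl | h
  · simp
  · rw [sub_eq_zero.1 h, ← zero_mul g, ← max_mul_of_nonneg _ _ hg.le, zero_mul]
    field_simp

section ConditionalExpectation

variable {Ω : Type*} {m m₀ : MeasurableSpace Ω} {P : Measure[m₀] Ω}

lemma MeasureTheory.Integrable.div_of_le {X V : Ω → ℝ} {c : ℝ} (hX : Integrable X P)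
    (hV : Measurable V) (hc : 0 < c) (hcV : ∀ ω, c ≤ V ω) : Integrable (fun ω => X ω / V ω) P := by
  have hbound : ∀ ω, ‖(V ω)⁻¹‖ ≤ c⁻¹ := fun ω => by
    rw [norm_inv, Real.norm_of_nonneg (hc.trans_le (hcV ω)).le]
    exact inv_anti₀ hc (hcV ω)
  simpa only [div_eq_inv_mul] using
    hX.bdd_mul (f := fun ω => (V ω)⁻¹) hV.inv.aestronglyMeasurable (ae_of_all _ hbound)

lemma condExp_sub_div_of_stronglyMeasurable {Y Z V : Ω → ℝ} {c : ℝ} (hm : m ≤ m₀)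
    [SigmaFinite (P.trim hm)] (hY : Integrable Y P) (hZ : StronglyMeasurable[m] Z)
    (hZint : Integrable Z P) (hV : StronglyMeasurable[m] V) (hc : 0 < c) (hcV : ∀ ω, c ≤ V ω) :
    P[fun ω => (Y ω - Z ω) / V ω | m] =ᵐ[P] fun ω => (P[Y | m] ω - Z ω) / V ω := by
  have hYZ := hY.sub hZint
  have hfun : (fun ω => (Y ω - Z ω) / V ω) = (fun ω => (V ω)⁻¹) * (Y - Z) := by
    ext ω
    exact div_eq_inv_mul _ _
  rw [hfun]
  filter_upwards [condExp_mul_of_stronglyMeasurable_left (f := fun ω => (V ω)⁻¹)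
      hV.measurable.inv.stronglyMeasurable
      (hfun ▸ hYZ.div_of_le (hV.measurable.mono hm le_rfl) hc hcV) hYZ,
    condExp_sub hY hZint m] with ω hmul hsub
  rw [hmul, Pi.mul_apply, hsub, Pi.sub_apply, condExp_of_stronglyMeasurable hm hZ hZint,
    div_eq_inv_mul]

end ConditionalExpectation

section ConditionalLaw

variable {Ω α 𝕎 : Type*} [MeasurableSpace Ω] [MeasurableSpace α] [MeasurableSpace 𝕎]
  {P : Measure Ω} {ν : Measure α} {Q : Measure 𝕎}
  {A : Ω → α} {W : Ω → 𝕎} {f : α → ℝ} {d F G : α × 𝕎 → ℝ}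

lemma condExp_residual_div_eq_condExp_bias_div [IsFiniteMeasure P] {Y : Ω → ℝ}
    (hA : Measurable A) (hW : Measurable W) (hY : Integrable Y P) {μ₀ μ g : α → 𝕎 → ℝ}
    (hμ : Measurable (Function.uncurry μ)) (hg : Measurable (Function.uncurry g))
    (hreg : P[Y | MeasurableSpace.comap (fun ω => (A ω, W ω)) inferInstance]
      =ᵐ[P] fun ω => μ₀ (A ω) (W ω))
    (hμ_int : Integrable (fun ω => μ (A ω) (W ω)) P) {c : ℝ} (hc : 0 < c)
    (hgc : ∀ a w, c ≤ g a w) :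
    P[fun ω => (Y ω - μ (A ω) (W ω)) / g (A ω) (W ω) | MeasurableSpace.comap A inferInstance]
      =ᵐ[P] P[fun ω => (μ₀ (A ω) (W ω) - μ (A ω) (W ω)) / g (A ω) (W ω) |
        MeasurableSpace.comap A inferInstance] := by
  have hAW : Measurable fun ω => (A ω, W ω) := hA.prodMk hW
  have hle : MeasurableSpace.comap A inferInstance ≤
      MeasurableSpace.comap (fun ω => (A ω, W ω)) inferInstance :=
    (measurable_fst.comp (comap_measurable (fun ω => (A ω, W ω)))).comap_le
  refine (condExp_condExp_of_le hle hAW.comap_le).symm.trans (condExp_congr_ae ?_)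
  filter_upwards [condExp_sub_div_of_stronglyMeasurable (Z := fun ω => μ (A ω) (W ω))
    (V := fun ω => g (A ω) (W ω)) hAW.comap_le hY
    (hμ.comp (comap_measurable _)).stronglyMeasurable hμ_int
    (hg.comp (comap_measurable _)).stronglyMeasurable hc fun ω => hgc (A ω) (W ω), hreg]
    with ω h₁ h₂
  rw [h₁, h₂]

lemma map_prod_eq_withDensity [SFinite Q] (hf : Measurable f)
    (hmarg : P.map A = ν.withDensity fun a => ENNReal.ofReal (f a)) :
    (P.map A).prod Q = (ν.prod Q).withDensity fun p => ENNReal.ofReal (f p.1) := by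
  rw [hmarg, prod_withDensity_left hf.ennreal_ofReal]

lemma integrable_prod_of_density [SFinite Q] (hA : Measurable A) (hW : Measurable W)
    (hf : Measurable f) (hd : Measurable d) (hF : Measurable F)
    (hmarg : P.map A = ν.withDensity fun a => ENNReal.ofReal (f a))
    (hjoint : P.map (fun ω => (A ω, W ω)) = (ν.prod Q).withDensity fun p => ENNReal.ofReal (d p))
    (hFG : ∀ p, max (d p) 0 * F p = max (f p.1) 0 * G p)
    (hFint : Integrable (fun ω => F (A ω, W ω)) P) :
    Integrable G ((P.map A).prod Q) := by
  have h := (integrable_map_measure hF.aestronglyMeasurable (hA.prodMk hW).aemeasurable).2 hFint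
  have hfst : Measurable fun p : α × 𝕎 => f p.1 := hf.comp measurable_fst
  rw [hjoint, integrable_withDensity_ofReal_congr hd hfst hFG] at h
  rwa [map_prod_eq_withDensity hf hmarg]

/-- `d / f` is the conditional density of `W` given `A` with respect to `Q`, so `hFG` says
`G = (d / f) • F` wherever `f > 0`. -/
lemma condExp_comap_eq_integral_of_density [IsFiniteMeasure P] [SFinite Q] (hA : Measurable A)
    (hW : Measurable W) (hf : Measurable f) (hd : Measurable d) (hF : Measurable F)
    (hG : Measurable G)
    (hmarg : P.map A = ν.withDensity fun a => ENNReal.ofReal (f a))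
    (hjoint : P.map (fun ω => (A ω, W ω)) = (ν.prod Q).withDensity fun p => ENNReal.ofReal (d p))
    (hFG : ∀ p, max (d p) 0 * F p = max (f p.1) 0 * G p)
    (hFint : Integrable (fun ω => F (A ω, W ω)) P) :
    P[fun ω => F (A ω, W ω) | MeasurableSpace.comap A inferInstance] =ᵐ[P]
      fun ω => ∫ w, G (A ω, w) ∂Q := by
  have hGint := integrable_prod_of_density hA hW hf hd hF hmarg hjoint hFG hFint
  have hK : Measurable fun a => ∫ w, G (a, w) ∂Q :=
    hG.stronglyMeasurable.integral_prod_right'.measurable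
  have hKint : Integrable (fun ω => ∫ w, G (A ω, w) ∂Q) P :=
    (integrable_map_measure hK.aestronglyMeasurable hA.aemeasurable).1 hGint.integral_prod_left
  refine (ae_eq_condExp_of_forall_setIntegral_eq hA.comap_le hFint
    (fun _ _ _ => hKint.integrableOn) ?_
    (hK.comp (comap_measurable A)).stronglyMeasurable.aestronglyMeasurable).symm
  rintro _ ⟨B, hB, rfl⟩ -
  have hBW : MeasurableSet (B ×ˢ (Set.univ : Set 𝕎)) := hB.prod MeasurableSet.univ
  have hfst : Measurable fun p : α × 𝕎 => f p.1 := hf.comp measurable_fst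
  calc ∫ ω in A ⁻¹' B, ∫ w, G (A ω, w) ∂Q ∂P
      = ∫ a in B, ∫ w, G (a, w) ∂Q ∂(P.map A) :=
        (setIntegral_map hB hK.aestronglyMeasurable hA.aemeasurable).symm
    _ = ∫ p in B ×ˢ Set.univ, G p ∂((P.map A).prod Q) := by
        rw [setIntegral_prod _ hGint.integrableOn, Measure.restrict_univ]
    _ = ∫ p in B ×ˢ Set.univ, F p ∂(P.map fun ω => (A ω, W ω)) := by
        rw [map_prod_eq_withDensity hf hmarg, hjoint, restrict_withDensity hBW,
          restrict_withDensity hBW]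
        exact (integral_withDensity_ofReal_congr hd hfst hFG).symm
    _ = ∫ ω in A ⁻¹' B, F (A ω, W ω) ∂P := by
        rw [setIntegral_map hBW hF.aestronglyMeasurable (hA.prodMk hW).aemeasurable,
          Set.mk_preimage_prod, Set.preimage_univ, Set.inter_univ]

lemma condExp_residual_div_eq_integral_sub [IsFiniteMeasure P] [IsFiniteMeasure Q] {Y : Ω → ℝ}
    (hA : Measurable A) (hW : Measurable W) (hY : Integrable Y P)
    {f₀ : α → ℝ} {μ₀ g₀ μ g : α → 𝕎 → ℝ} (hf₀ : Measurable f₀)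
    (hμ₀ : Measurable (Function.uncurry μ₀)) (hg₀ : Measurable (Function.uncurry g₀))
    (hμ : Measurable (Function.uncurry μ)) (hg : Measurable (Function.uncurry g))
    (hmarg : P.map A = ν.withDensity fun a => ENNReal.ofReal (f₀ a))
    (hjoint : P.map (fun ω => (A ω, W ω)) =
      (ν.prod Q).withDensity fun p => ENNReal.ofReal (f₀ p.1 * g₀ p.1 p.2))
    (hreg : P[Y | MeasurableSpace.comap (fun ω => (A ω, W ω)) inferInstance]
      =ᵐ[P] fun ω => μ₀ (A ω) (W ω))
    {Cμ c : ℝ} (hCμ : ∀ a w, |μ a w| ≤ Cμ) (hc : 0 < c) (hgc : ∀ a w, c ≤ g a w)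
    (herr : ∀ a w, (μ₀ a w - μ a w) * (g₀ a w - g a w) = 0) :
    P[fun ω => (Y ω - μ (A ω) (W ω)) / g (A ω) (W ω) | MeasurableSpace.comap A inferInstance]
      =ᵐ[P] fun ω => (∫ w, μ₀ (A ω) w ∂Q) - ∫ w, μ (A ω) w ∂Q := by
  have hAW : Measurable fun ω => (A ω, W ω) := hA.prodMk hW
  have hμ_int : Integrable (fun ω => μ (A ω) (W ω)) P :=
    .of_bound (hμ.comp hAW).aestronglyMeasurable Cμ (ae_of_all _ fun ω => hCμ _ _)
  have hres_int := ((integrable_condExp.congr hreg).sub hμ_int).div_of_le (hg.comp hAW) hc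
    fun ω => hgc (A ω) (W ω)
  have hDR : ∀ p : α × 𝕎, max (f₀ p.1 * g₀ p.1 p.2) 0 * ((μ₀ p.1 p.2 - μ p.1 p.2) / g p.1 p.2)
      = max (f₀ p.1) 0 * (μ₀ p.1 p.2 - μ p.1 p.2) := fun p =>
    max_mul_mul_div_eq_of_mul_sub_eq_zero (hc.trans_le (hgc _ _)) (herr _ _)
  have hd : Measurable fun p : α × 𝕎 => f₀ p.1 * g₀ p.1 p.2 := (hf₀.comp measurable_fst).mul hg₀
  have hF : Measurable fun p : α × 𝕎 => (μ₀ p.1 p.2 - μ p.1 p.2) / g p.1 p.2 :=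
    (hμ₀.sub hμ).div hg
  have hGint := integrable_prod_of_density hA hW hf₀ hd hF hmarg hjoint hDR hres_int
  filter_upwards [condExp_residual_div_eq_condExp_bias_div hA hW hY hμ hg hreg hμ_int hc hgc,
    condExp_comap_eq_integral_of_density hA hW hf₀ hd hF (G := fun p => μ₀ p.1 p.2 - μ p.1 p.2)
      (hμ₀.sub hμ) hmarg hjoint hDR hres_int,
    ae_of_ae_map hA.aemeasurable hGint.prod_right_ae] with ω h₁ h₂ hω
  have hμQ : Integrable (fun w => μ (A ω) w) Q :=
    .of_bound hμ.of_uncurry_left.aestronglyMeasurable Cμ (ae_of_all _ (hCμ (A ω)))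
  have hμ₀Q : Integrable (fun w => μ₀ (A ω) w) Q :=
    (hω.add hμQ).congr (ae_of_all _ fun w => sub_add_cancel (μ₀ (A ω) w) (μ (A ω) w))
  rw [h₁, h₂, integral_sub hμ₀Q hμQ]

end ConditionalLaw

theorem pseudo_outcome_double_robustness_general
    {Ω 𝕎 : Type*} [MeasurableSpace Ω] [MeasurableSpace 𝕎]
    (P : Measure Ω) [IsProbabilityMeasure P]
    (Y : Ω → ℝ) (A : Ω → ℝ) (W : Ω → 𝕎)
    (hA : Measurable A) (hW : Measurable W)
    (hYint : Integrable Y P)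
    (Q0 : Measure 𝕎) (hQ0 : Q0 = P.map W)
    (f0 : ℝ → ℝ) (μ0 g0 μ g : ℝ → 𝕎 → ℝ)
    (hf0 : Measurable f0)
    (hμ0m : Measurable (Function.uncurry μ0))
    (hg0m : Measurable (Function.uncurry g0))
    (hμm : Measurable (Function.uncurry μ))
    (hgm : Measurable (Function.uncurry g))
    -- `A` has marginal Lebesgue density `f0`
    (hmargA : P.map A = (volume : Measure ℝ).withDensity fun a => ENNReal.ofReal (f0 a))
    -- the conditional law of `W` given `A = a` is `g0(a,·) dQ0`, i.e. the joint law of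
    -- `(A, W)` has density `f0(a) g0(a,w)` with respect to Lebesgue ⊗ Q0
    (hjoint : P.map (fun ω => (A ω, W ω)) =
      ((volume : Measure ℝ).prod Q0).withDensity
        fun p => ENNReal.ofReal (f0 p.1 * g0 p.1 p.2))
    -- `μ0` is the outcome regression `E[Y | A = a, W = w]`
    (hreg : MeasureTheory.condExp (MeasurableSpace.comap (fun ω => (A ω, W ω)) inferInstance) P Y
      =ᵐ[P] fun ω => μ0 (A ω) (W ω))
    -- `μ` is bounded and `g` is bounded away from zero (and above)
    (Cμ c C : ℝ) (hCμ : ∀ a w, |μ a w| ≤ Cμ)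
    (hc : 0 < c) (hgb : ∀ a w, c ≤ g a w ∧ g a w ≤ C)
    -- the doubly-robust partition: `S1 ∪ S2 ∪ S3` covers the domain, `μ = μ0` on
    -- `S1 ∪ S3`, and `g = g0` on `S2 ∪ S3`
    (S1 S2 S3 : Set (ℝ × 𝕎))
    (hcover : S1 ∪ S2 ∪ S3 = Set.univ)
    (hμeq : ∀ p ∈ S1 ∪ S3, μ p.1 p.2 = μ0 p.1 p.2)
    (hgeq : ∀ p ∈ S2 ∪ S3, g p.1 p.2 = g0 p.1 p.2) :
    MeasureTheory.condExp (MeasurableSpace.comap A inferInstance) P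
        (fun ω => (Y ω - μ (A ω) (W ω)) / g (A ω) (W ω) + ∫ w, μ (A ω) w ∂Q0)
      =ᵐ[P] fun ω => ∫ w, μ0 (A ω) w ∂Q0 := by
  have : IsProbabilityMeasure Q0 := hQ0 ▸ Measure.isProbabilityMeasure_map hW.aemeasurable
  have herr : ∀ a w, (μ0 a w - μ a w) * (g0 a w - g a w) = 0 := fun a w =>
    sub_mul_sub_eq_zero_of_union_eq_univ (u := Function.uncurry μ) (u₀ := Function.uncurry μ0)
      (v := Function.uncurry g) (v₀ := Function.uncurry g0) hcover hμeq hgeq (a, w)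
  have hm : Measurable fun a => ∫ w, μ a w ∂Q0 :=
    hμm.stronglyMeasurable.integral_prod_right.measurable
  have hm_int : Integrable (fun ω => ∫ w, μ (A ω) w ∂Q0) P :=
    .of_bound (hm.comp hA).aestronglyMeasurable (Cμ * 1) (ae_of_all _ fun ω =>
      (norm_integral_le_of_norm_le_const (ae_of_all _ (hCμ (A ω)))).trans_eq (by simp))
  have hAW : Measurable fun ω => (A ω, W ω) := hA.prodMk hW
  have hμ_int : Integrable (fun ω => μ (A ω) (W ω)) P :=
    .of_bound (hμm.comp hAW).aestronglyMeasurable Cμ (ae_of_all _ fun ω => hCμ _ _)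
  have hres_int : Integrable (fun ω => (Y ω - μ (A ω) (W ω)) / g (A ω) (W ω)) P :=
    (hYint.sub hμ_int).div_of_le (hgm.comp hAW) hc fun ω => (hgb _ _).1
  filter_upwards [condExp_add hres_int hm_int (MeasurableSpace.comap A inferInstance),
    condExp_residual_div_eq_integral_sub hA hW hYint hf0 hμ0m hg0m hμm hgm hmargA hjoint hreg
      hCμ hc (fun a w => (hgb a w).1) herr] with ω hadd hres
  rw [condExp_of_stronglyMeasurable (f := fun ω => ∫ w, μ (A ω) w ∂Q0) hA.comap_le
    (hm.comp (comap_measurable A)).stronglyMeasurable hm_int, Pi.add_apply, hres] at hadd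
  exact hadd.trans (sub_add_cancel _ _)

/-- Double robustness of the pseudo-outcome: if there is a measurable partition
`S1, S2, S3` of the domain such that `μ = μ0` on `S1 ∪ S3` and `g = g0` on `S2 ∪ S3`,
then the conditional expectation given `A` of the pseudo-outcome
`(Y − μ(A,W))/g(A,W) + ∫ μ(A,w̄) dQ0(w̄)` equals `θ0(A)` almost surely, where
`θ0(a) = ∫ μ0(a,w) dQ0(w)`. -/
theorem pseudo_outcome_double_robustness
    {Ω 𝕎 : Type*} [MeasurableSpace Ω] [MeasurableSpace 𝕎]
    (P : Measure Ω) [IsProbabilityMeasure P]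
    (Y : Ω → ℝ) (A : Ω → ℝ) (W : Ω → 𝕎)
    (hY : Measurable Y) (hA : Measurable A) (hW : Measurable W)
    (hYint : Integrable Y P)
    (Q0 : Measure 𝕎) (hQ0 : Q0 = P.map W)
    (f0 : ℝ → ℝ) (μ0 g0 μ g : ℝ → 𝕎 → ℝ)
    (hf0 : Measurable f0)
    (hμ0m : Measurable (Function.uncurry μ0))
    (hg0m : Measurable (Function.uncurry g0))
    (hμm : Measurable (Function.uncurry μ))
    (hgm : Measurable (Function.uncurry g))
    -- `A` has marginal Lebesgue density `f0`
    (hmargA : P.map A = (volume : Measure ℝ).withDensity fun a => ENNReal.ofReal (f0 a))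
    -- the conditional law of `W` given `A = a` is `g0(a,·) dQ0`, i.e. the joint law of
    -- `(A, W)` has density `f0(a) g0(a,w)` with respect to Lebesgue ⊗ Q0
    (hjoint : P.map (fun ω => (A ω, W ω)) =
      ((volume : Measure ℝ).prod Q0).withDensity
        fun p => ENNReal.ofReal (f0 p.1 * g0 p.1 p.2))
    -- `μ0` is the outcome regression `E[Y | A = a, W = w]`
    (hreg : MeasureTheory.condExp (MeasurableSpace.comap (fun ω => (A ω, W ω)) inferInstance) P Y
      =ᵐ[P] fun ω => μ0 (A ω) (W ω))
    -- `μ` is bounded and `g` is bounded away from zero (and above)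
    (Cμ c C : ℝ) (hCμ : ∀ a w, |μ a w| ≤ Cμ)
    (hc : 0 < c) (hgb : ∀ a w, c ≤ g a w ∧ g a w ≤ C)
    -- the doubly-robust partition: `S1 ∪ S2 ∪ S3` covers the domain, `μ = μ0` on
    -- `S1 ∪ S3`, and `g = g0` on `S2 ∪ S3`
    (S1 S2 S3 : Set (ℝ × 𝕎))
    (hS1 : MeasurableSet S1) (hS2 : MeasurableSet S2) (hS3 : MeasurableSet S3)
    (hcover : S1 ∪ S2 ∪ S3 = Set.univ)
    (hμeq : ∀ p ∈ S1 ∪ S3, μ p.1 p.2 = μ0 p.1 p.2)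
    (hgeq : ∀ p ∈ S2 ∪ S3, g p.1 p.2 = g0 p.1 p.2) :
    MeasureTheory.condExp (MeasurableSpace.comap A inferInstance) P
        (fun ω => (Y ω - μ (A ω) (W ω)) / g (A ω) (W ω) + ∫ w, μ (A ω) w ∂Q0)
      =ᵐ[P] fun ω => ∫ w, μ0 (A ω) w ∂Q0 :=
  pseudo_outcome_double_robustness_general P Y A W hA hW hYint Q0 hQ0 f0 μ0 g0 μ g hf0 hμ0m hg0m hμm
    hgm hmargA hjoint hreg Cμ c C hCμ hc hgb S1 S2 S3 hcover hμeq hgeq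
end

section
/- Under the same smoothness assumptions (θ0 twice continuously differentiable near a0, f0 positive and Lipschitz near a0, K a symmetric Lipschitz kernel supported in [−1,1]), define the population third-order local polynomial second-derivative functional θ_b^{(2)}(a0) = 2 b⁻² e3ᵀ D_{b,3}⁻¹ ∫ w3(a) K_{b,a0}(a) θ0(a) f0(a) da, where w3(a) = (1, (a−a0)/b, ((a−a0)/b)², ((a−a0)/b)³)ᵀ and D_{b,3} = ∫ w3 w3ᵀ K_{b,a0} f0. Then θ_b^{(2)}(a0) → θ0''(a0) as b → 0. -/
/-!
Substituting `a = a0 + b u` turns `D_{b,3}` into the kernel moments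
`∫ u^(i+j) K(u) f0(a0 + b u) du`, which tend to `f0(a0) S4` by dominated convergence.
Write `θ0(a0 + h) = θ0(a0) + h θ0'(a0) + h² θ0''(a0)/2 + r(h)` with `r(h) = o(h²)`.
The quadratic part is the cubic in `u` with coefficients
`c_b = (θ0(a0), b θ0'(a0), b² θ0''(a0)/2, 0)`, so the local polynomial vector is
`D_{b,3} c_b + ρ_b` with `ρ_b` the moments of `r(b u)`, and
`θ_b^{(2)}(a0) = θ0''(a0) + 2 e3ᵀ D_{b,3}⁻¹ (b⁻² ρ_b)`.
Since `|r(b u)| / b² ≤ u²` for small `b` and `r(b u) / b² → 0` pointwise, dominated convergence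
gives `b⁻² ρ_b → 0`, while `D_{b,3}⁻¹ → (f0(a0) S4)⁻¹`.
-/

open MeasureTheory Matrix Topology Filter

/-- The third-order local polynomial design vector
`w3(a) = (1, (a−a0)/b, ((a−a0)/b)², ((a−a0)/b)³)ᵀ`. -/
noncomputable def lcWeight (a0 b a : ℝ) : Fin 4 → ℝ :=
  ![1, (a - a0) / b, ((a - a0) / b) ^ 2, ((a - a0) / b) ^ 3]

/-- The population third-order local polynomial moment matrix
`D_{b,3} = ∫ w3 w3ᵀ K_{b,a0} f0`. -/
noncomputable def lcMatrix (K f0 : ℝ → ℝ) (a0 b : ℝ) : Matrix (Fin 4) (Fin 4) ℝ :=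
  Matrix.of fun i j =>
    ∫ a, lcWeight a0 b a i * lcWeight a0 b a j * (K ((a - a0) / b) / b) * f0 a

/-- The population third-order local polynomial second-derivative functional
`θ_b^{(2)}(a0) = 2 b⁻² e3ᵀ D_{b,3}⁻¹ ∫ w3(a) K_{b,a0}(a) θ0(a) f0(a) da`. -/
noncomputable def lcSecondDeriv (K f0 θ0 : ℝ → ℝ) (a0 b : ℝ) : ℝ :=
  2 / b ^ 2 *
    ((lcMatrix K f0 a0 b)⁻¹ *ᵥ
      fun i => ∫ a, lcWeight a0 b a i * (K ((a - a0) / b) / b) * θ0 a * f0 a) 2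

/-- The kernel moment matrix `S4 = (c_{i+j−2})_{1 ≤ i,j ≤ 4}`. -/
noncomputable def kernelMomentMatrix4 (K : ℝ → ℝ) : Matrix (Fin 4) (Fin 4) ℝ :=
  Matrix.of fun i j => ∫ u, u ^ ((i : ℕ) + (j : ℕ)) * K u

open Set Asymptotics

theorem ContDiffAt.isLittleO_taylor_two {f : ℝ → ℝ} {x₀ : ℝ} (hf : ContDiffAt ℝ 2 f x₀) :
    (fun h => f (x₀ + h) - (f x₀ + h * deriv f x₀ + h ^ 2 / 2 * deriv (deriv f) x₀))
      =o[𝓝 0] fun h => h ^ 2 := by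
  obtain ⟨u, hu, hfu⟩ := hf.contDiffOn (m := 2) le_rfl (by simp)
  obtain ⟨ε, hε, hball⟩ := Metric.mem_nhds_iff.1 hu
  have hs : IsOpen (Metric.ball x₀ ε) := Metric.isOpen_ball
  have hx₀ : x₀ ∈ Metric.ball x₀ ε := Metric.mem_ball_self hε
  have htaylor := taylor_isLittleO (convex_ball x₀ ε) hx₀ (hfu.mono hball)
  rw [hs.nhdsWithin_eq hx₀] at htaylor
  have hshift : Tendsto (fun h : ℝ => x₀ + h) (𝓝 0) (𝓝 x₀) := by
    simpa using (continuous_const_add x₀).tendsto 0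
  have hderiv2 : iteratedDerivWithin 2 f (Metric.ball x₀ ε) x₀ = deriv (deriv f) x₀ := by
    rw [iteratedDerivWithin_of_isOpen hs hx₀, iteratedDeriv_succ, iteratedDeriv_one]
  refine (htaylor.comp_tendsto hshift).congr (fun h => ?_) (fun h => by simp)
  simp only [Function.comp_apply, taylor_within_apply, Finset.sum_range_succ,
    Finset.sum_range_zero, iteratedDerivWithin_zero, iteratedDerivWithin_one,
    derivWithin_of_isOpen hs hx₀, hderiv2, add_sub_cancel_left, smul_eq_mul,
    Nat.factorial_zero, Nat.factorial_one, Nat.factorial_two, Nat.cast_one, Nat.cast_ofNat]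
  ring

theorem Asymptotics.IsLittleO.tendsto_comp_mul_div_sq {r : ℝ → ℝ}
    (hr : r =o[𝓝 0] fun h => h ^ 2) (u : ℝ) :
    Tendsto (fun b => r (b * u) / b ^ 2) (𝓝 0) (𝓝 0) := by
  have hu : Tendsto (fun b : ℝ => b * u) (𝓝 0) (𝓝 0) := by
    simpa using (continuous_mul_const u).tendsto 0
  have hsq : (fun b : ℝ => (b * u) ^ 2) =O[𝓝 0] fun b => b ^ 2 :=
    (isBigO_const_mul_self (u ^ 2) _ _).congr_left fun b => by ring
  exact ((hr.comp_tendsto hu).trans_isBigO hsq).tendsto_div_nhds_zero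

section LocalRescaling

variable {f : ℝ → ℝ} {s : Set ℝ} {a0 : ℝ}

theorem tendsto_add_mul_nhds (a0 u : ℝ) : Tendsto (fun b : ℝ => a0 + b * u) (𝓝 0) (𝓝 a0) := by
  simpa using ((continuous_mul_const u).const_add a0).tendsto 0

theorem eventually_forall_Icc_add_mul {P : ℝ → Prop} (h : ∀ᶠ x in 𝓝 a0, P x) :
    ∀ᶠ b in 𝓝 (0 : ℝ), ∀ u ∈ Icc (-1 : ℝ) 1, P (a0 + b * u) := by
  obtain ⟨η, hη, hP⟩ := Metric.eventually_nhds_iff.1 h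
  filter_upwards [Metric.ball_mem_nhds 0 hη] with b hb u hu
  rw [mem_ball_zero_iff, Real.norm_eq_abs] at hb
  apply hP
  rw [Real.dist_eq, add_sub_cancel_left, abs_mul]
  nlinarith [abs_nonneg b, abs_le.2 hu]

theorem eventually_continuousOn_comp_add_mul (hf : ContinuousOn f s) (hs : s ∈ 𝓝 a0) :
    ∀ᶠ b in 𝓝 (0 : ℝ), ContinuousOn (fun u => f (a0 + b * u)) (Icc (-1) 1) := by
  filter_upwards [eventually_forall_Icc_add_mul (eventually_mem_nhds_iff.2 hs)] with b hb u hu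
  exact ((hf.continuousAt (hb u hu)).comp (f := fun u => a0 + b * u)
    (by fun_prop)).continuousWithinAt

theorem ContinuousAt.exists_eventually_abs_comp_add_mul_le (hf : ContinuousAt f a0) :
    ∃ M, ∀ᶠ b in 𝓝 (0 : ℝ), ∀ u ∈ Icc (-1 : ℝ) 1, |f (a0 + b * u)| ≤ M :=
  ⟨|f a0| + 1, eventually_forall_Icc_add_mul <|
    (hf.abs.eventually_lt continuousAt_const (lt_add_one _)).mono fun _ => le_of_lt⟩

end LocalRescaling

section KernelIntegrals

variable {K : ℝ → ℝ}

theorem integrable_mul_of_continuousOn_Icc (hK : Continuous K)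
    (hsupp : ∀ u ∉ Icc (-1 : ℝ) 1, K u = 0) {g : ℝ → ℝ} (hg : ContinuousOn g (Icc (-1) 1)) :
    Integrable fun u => K u * g u :=
  (hK.continuousOn.mul hg).integrableOn_Icc.integrable_of_forall_notMem_eq_zero
    fun u hu => by simp [hsupp u hu]

theorem tendsto_integral_mul_of_dominated (hK : Continuous K)
    (hsupp : ∀ u ∉ Icc (-1 : ℝ) 1, K u = 0) {ι : Type*} {l : Filter ι} [l.IsCountablyGenerated]
    {F : ι → ℝ → ℝ} {G : ℝ → ℝ} {C : ℝ}
    (hF : ∀ᶠ b in l, ContinuousOn (F b) (Icc (-1) 1))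
    (hFC : ∀ᶠ b in l, ∀ u ∈ Icc (-1 : ℝ) 1, |F b u| ≤ C)
    (hFG : ∀ u ∈ Icc (-1 : ℝ) 1, Tendsto (fun b => F b u) l (𝓝 (G u))) :
    Tendsto (fun b => ∫ u, K u * F b u) l (𝓝 (∫ u, K u * G u)) := by
  refine tendsto_integral_filter_of_dominated_convergence (fun u => ‖K u * C‖) ?_ ?_
    (integrable_mul_of_continuousOn_Icc hK hsupp continuousOn_const).norm ?_
  · filter_upwards [hF] with b hb
    exact (integrable_mul_of_continuousOn_Icc hK hsupp hb).aestronglyMeasurable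
  · filter_upwards [hFC] with b hb
    refine Eventually.of_forall fun u => ?_
    by_cases hu : u ∈ Icc (-1 : ℝ) 1
    · rw [norm_mul, norm_mul]
      exact mul_le_mul_of_nonneg_left ((hb u hu).trans (le_abs_self C)) (norm_nonneg _)
    · simp [hsupp u hu]
  · refine Eventually.of_forall fun u => ?_
    by_cases hu : u ∈ Icc (-1 : ℝ) 1
    · exact (hFG u hu).const_mul (K u)
    · simpa [hsupp u hu] using tendsto_const_nhds

end KernelIntegrals

theorem integral_comp_sub_div_div (G : ℝ → ℝ) (a0 : ℝ) {b : ℝ} (hb : 0 < b) :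
    ∫ a, G ((a - a0) / b) / b = ∫ u, G u := by
  rw [integral_div, integral_sub_right_eq_self (fun a => G (a / b)), Measure.integral_comp_div,
    abs_of_pos hb, smul_eq_mul, mul_div_cancel_left₀ _ hb.ne']

section LocalPolynomial

variable {K f0 θ0 : ℝ → ℝ} {a0 b : ℝ}

noncomputable def lcVector (K f0 θ0 : ℝ → ℝ) (a0 b : ℝ) : Fin 4 → ℝ :=
  fun i => ∫ a, lcWeight a0 b a i * (K ((a - a0) / b) / b) * θ0 a * f0 a

noncomputable def lcResidual (K f0 θ0 : ℝ → ℝ) (a0 b : ℝ) (c : Fin 4 → ℝ) : Fin 4 → ℝ :=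
  fun i => ∫ u, K u * (u ^ (i : ℕ) * ((θ0 (a0 + b * u) - ∑ j, c j * u ^ (j : ℕ)) *
    f0 (a0 + b * u)))

theorem lcWeight_apply (a0 b a : ℝ) (i : Fin 4) : lcWeight a0 b a i = ((a - a0) / b) ^ (i : ℕ) := by
  fin_cases i <;> simp [lcWeight]

theorem lcMatrix_apply_eq_integral (hb : 0 < b) (i j : Fin 4) :
    lcMatrix K f0 a0 b i j = ∫ u, K u * (u ^ ((i : ℕ) + (j : ℕ)) * f0 (a0 + b * u)) := by
  rw [← integral_comp_sub_div_div _ a0 hb]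
  refine integral_congr_ae (Eventually.of_forall fun a => ?_)
  have ha : a0 + b * ((a - a0) / b) = a := by field_simp; ring
  simp only [lcWeight_apply, ha, pow_add]
  ring

theorem lcVector_apply_eq_integral (hb : 0 < b) (i : Fin 4) :
    lcVector K f0 θ0 a0 b i = ∫ u, K u * (u ^ (i : ℕ) * (θ0 (a0 + b * u) * f0 (a0 + b * u))) := by
  rw [← integral_comp_sub_div_div _ a0 hb]
  refine integral_congr_ae (Eventually.of_forall fun a => ?_)
  have ha : a0 + b * ((a - a0) / b) = a := by field_simp; ring
  simp only [lcWeight_apply, ha]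
  ring

theorem lcVector_eq_mulVec_add_lcResidual (hK : Continuous K)
    (hsupp : ∀ u ∉ Icc (-1 : ℝ) 1, K u = 0) (hb : 0 < b)
    (hθ : ContinuousOn (fun u => θ0 (a0 + b * u)) (Icc (-1) 1))
    (hf : ContinuousOn (fun u => f0 (a0 + b * u)) (Icc (-1) 1)) (c : Fin 4 → ℝ) :
    lcVector K f0 θ0 a0 b = lcMatrix K f0 a0 b *ᵥ c + lcResidual K f0 θ0 a0 b c := by
  ext i
  have hmoment (n : ℕ) (x : ℝ) : Integrable fun u => K u * (u ^ n * f0 (a0 + b * u)) * x :=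
    (integrable_mul_of_continuousOn_Icc hK hsupp ((continuousOn_pow n).mul hf)).mul_const x
  have hresidual : Integrable fun u => K u * (u ^ (i : ℕ) *
      ((θ0 (a0 + b * u) - ∑ j, c j * u ^ (j : ℕ)) * f0 (a0 + b * u))) :=
    integrable_mul_of_continuousOn_Icc hK hsupp <| (continuousOn_pow _).mul <|
      (hθ.sub (by fun_prop)).mul hf
  simp only [Pi.add_apply, mulVec, dotProduct, lcMatrix_apply_eq_integral hb,
    lcVector_apply_eq_integral hb, lcResidual, ← integral_mul_const]
  rw [← integral_finsetSum _ fun j _ => hmoment _ _,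
    ← integral_add (integrable_finsetSum _ fun j _ => hmoment _ _) hresidual]
  congr 1 with u
  simp only [Fin.sum_univ_four, Fin.val_zero, Fin.val_one, Fin.val_two]
  ring

end LocalPolynomial

section MatrixLimits

variable {𝕜 ι α : Type*} [NormedField 𝕜] [Fintype ι] [DecidableEq ι] {l : Filter α}
  {A : α → Matrix ι ι 𝕜} {A₀ : Matrix ι ι 𝕜}

theorem Filter.Tendsto.eventually_isUnit_det (hA : Tendsto A l (𝓝 A₀)) (hA₀ : IsUnit A₀.det) :
    ∀ᶠ x in l, IsUnit (A x).det :=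
  ((continuous_id.matrix_det.tendsto A₀).comp hA |>.eventually_ne
    (isUnit_iff_ne_zero.1 hA₀)).mono fun _ => isUnit_iff_ne_zero.2

theorem Filter.Tendsto.matrix_inv_mulVec (hA : Tendsto A l (𝓝 A₀)) (hA₀ : IsUnit A₀.det)
    {v : α → ι → 𝕜} {v₀ : ι → 𝕜} (hv : Tendsto v l (𝓝 v₀)) :
    Tendsto (fun x => (A x)⁻¹ *ᵥ v x) l (𝓝 (A₀⁻¹ *ᵥ v₀)) := by
  have hinv : ContinuousAt Inv.inv A₀ := continuousAt_matrix_inv A₀ <| by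
    rw [Ring.inverse_eq_inv']
    exact continuousAt_inv₀ (isUnit_iff_ne_zero.1 hA₀)
  exact ((continuous_fst.matrix_mulVec continuous_snd).tendsto _).comp
    ((hinv.tendsto.comp hA).prodMk_nhds hv)

end MatrixLimits

section LocalPolynomialLimits

variable {K f0 θ0 : ℝ → ℝ} {s : Set ℝ} {a0 : ℝ}

theorem tendsto_lcMatrix (hK : Continuous K) (hsupp : ∀ u ∉ Icc (-1 : ℝ) 1, K u = 0)
    (hf : ContinuousOn f0 s) (hs : s ∈ 𝓝 a0) :
    Tendsto (lcMatrix K f0 a0) (𝓝[>] 0) (𝓝 (f0 a0 • kernelMomentMatrix4 K)) := by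
  obtain ⟨M, hM⟩ := (hf.continuousAt hs).exists_eventually_abs_comp_add_mul_le
  have hmoment (n : ℕ) : Tendsto (fun b => ∫ u, K u * (u ^ n * f0 (a0 + b * u))) (𝓝 0)
      (𝓝 (∫ u, K u * (u ^ n * f0 a0))) := by
    refine tendsto_integral_mul_of_dominated hK hsupp (C := M) ?_ ?_ fun u _ =>
      ((hf.continuousAt hs).tendsto.comp (tendsto_add_mul_nhds a0 u)).const_mul _
    · filter_upwards [eventually_continuousOn_comp_add_mul hf hs] with b hb
      exact (continuousOn_pow n).mul hb
    · filter_upwards [hM] with b hb u hu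
      rw [abs_mul, abs_pow, ← one_mul M]
      exact mul_le_mul (pow_le_one₀ (abs_nonneg u) (abs_le.2 hu)) (hb u hu) (abs_nonneg _)
        zero_le_one
  refine tendsto_pi_nhds.2 fun i => tendsto_pi_nhds.2 fun j => ?_
  have hlimit : ∫ u, K u * (u ^ ((i : ℕ) + (j : ℕ)) * f0 a0) =
      (f0 a0 • kernelMomentMatrix4 K) i j := by
    rw [Matrix.smul_apply, kernelMomentMatrix4, of_apply, smul_eq_mul, ← integral_const_mul]
    congr 1 with u
    ring
  rw [← hlimit]
  refine ((hmoment _).mono_left nhdsWithin_le_nhds).congr' ?_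
  filter_upwards [self_mem_nhdsWithin] with b hb
  exact (lcMatrix_apply_eq_integral hb i j).symm

theorem tendsto_inv_sq_smul_lcResidual (hK : Continuous K)
    (hsupp : ∀ u ∉ Icc (-1 : ℝ) 1, K u = 0) (hf : ContinuousOn f0 s)
    (hθ : ContDiffOn ℝ 2 θ0 s) (hs : s ∈ 𝓝 a0) :
    Tendsto (fun b => (b ^ 2)⁻¹ • lcResidual K f0 θ0 a0 b
      ![θ0 a0, b * deriv θ0 a0, b ^ 2 * (deriv (deriv θ0) a0 / 2), 0]) (𝓝 0) (𝓝 0) := by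
  set r := fun h => θ0 (a0 + h) - (θ0 a0 + h * deriv θ0 a0 + h ^ 2 / 2 * deriv (deriv θ0) a0)
  have hr : r =o[𝓝 0] fun h => h ^ 2 := (hθ.contDiffAt hs).isLittleO_taylor_two
  have hr_le : ∀ᶠ b in 𝓝 (0 : ℝ), ∀ u ∈ Icc (-1 : ℝ) 1, |r (b * u) / b ^ 2| ≤ 1 := by
    filter_upwards [eventually_forall_Icc_add_mul (a0 := 0) (hr.bound one_pos)] with b hb u hu
    simp only [zero_add, one_mul, norm_pow, Real.norm_eq_abs, sq_abs] at hb
    rw [abs_div, abs_pow, sq_abs]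
    refine div_le_one_of_le₀ ((hb u hu).trans ?_) (sq_nonneg b)
    rw [mul_pow]
    exact mul_le_of_le_one_right (sq_nonneg b) ((sq_le_one_iff_abs_le_one u).2 (abs_le.2 hu))
  obtain ⟨M, hM⟩ := (hf.continuousAt hs).exists_eventually_abs_comp_add_mul_le
  refine tendsto_pi_nhds.2 fun i => ?_
  rw [Pi.zero_apply]
  have hlim := tendsto_integral_mul_of_dominated hK hsupp (l := 𝓝 0) (G := 0) (C := M)
    (F := fun b u => u ^ (i : ℕ) * (r (b * u) / b ^ 2 * f0 (a0 + b * u))) ?_ ?_ ?_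
  · simp only [Pi.zero_apply, mul_zero, integral_zero] at hlim
    refine hlim.congr fun b => ?_
    simp only [Pi.smul_apply, smul_eq_mul, lcResidual, ← integral_const_mul]
    congr 1 with u
    simp only [r, Fin.sum_univ_four, cons_val_zero, cons_val_one, cons_val,
      Fin.coe_ofNat_eq_mod, Nat.mod_succ]
    ring
  · filter_upwards [eventually_continuousOn_comp_add_mul hθ.continuousOn hs,
      eventually_continuousOn_comp_add_mul hf hs] with b hθb hfb
    exact (continuousOn_pow _).mul (((hθb.sub (by fun_prop)).div_const _).mul hfb)
  · filter_upwards [hr_le, hM] with b hrb hfb u hu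
    rw [abs_mul, abs_mul, abs_pow, ← one_mul M, ← one_mul (1 * M)]
    exact mul_le_mul (pow_le_one₀ (abs_nonneg u) (abs_le.2 hu))
      (mul_le_mul (hrb u hu) (hfb u hu) (abs_nonneg _) zero_le_one) (by positivity) zero_le_one
  · intro u _
    simpa using ((hr.tendsto_comp_mul_div_sq u).mul
      ((hf.continuousAt hs).tendsto.comp (tendsto_add_mul_nhds a0 u))).const_mul (u ^ (i : ℕ))

end LocalPolynomialLimits

theorem lcSecondDeriv_eq_of_lcVector_eq {K f0 θ0 : ℝ → ℝ} {a0 b c₀ c₁ c₃ d : ℝ}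
    {ρ : Fin 4 → ℝ} (hb : b ≠ 0) (hD : IsUnit (lcMatrix K f0 a0 b).det)
    (hv : lcVector K f0 θ0 a0 b = lcMatrix K f0 a0 b *ᵥ ![c₀, c₁, b ^ 2 * (d / 2), c₃] + ρ) :
    lcSecondDeriv K f0 θ0 a0 b = d + 2 * ((lcMatrix K f0 a0 b)⁻¹ *ᵥ (b ^ 2)⁻¹ • ρ) 2 := by
  change 2 / b ^ 2 * ((lcMatrix K f0 a0 b)⁻¹ *ᵥ lcVector K f0 θ0 a0 b) 2 = _
  rw [hv, mulVec_add, mulVec_mulVec, nonsing_inv_mul _ hD, one_mulVec, mulVec_smul]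
  simp only [Pi.add_apply, cons_val, Pi.smul_apply, smul_eq_mul]
  field_simp

theorem local_cubic_second_derivative_consistency_general
    (K f0 θ0 : ℝ → ℝ) (a0 δ : ℝ) (hδ : 0 < δ) (LK Lf : NNReal)
    (hKsupp : ∀ u, 1 < |u| → K u = 0)
    (hKlip : LipschitzWith LK K)
    (hS4 : IsUnit (kernelMomentMatrix4 K).det)
    (hf0pos : ∀ a ∈ Set.Icc (a0 - δ) (a0 + δ), 0 < f0 a)
    (hf0lip : LipschitzOnWith Lf f0 (Set.Icc (a0 - δ) (a0 + δ)))
    (hθ : ContDiffOn ℝ 2 θ0 (Metric.ball a0 δ)) :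
    Tendsto (fun b : ℝ => lcSecondDeriv K f0 θ0 a0 b)
      (𝓝[>] 0) (𝓝 (deriv (deriv θ0) a0)) := by
  have hK : Continuous K := hKlip.continuous
  have hsupp : ∀ u ∉ Icc (-1 : ℝ) 1, K u = 0 := fun u hu =>
    hKsupp u (lt_of_not_ge fun h => hu (abs_le.1 h))
  have hball : Metric.ball a0 δ ∈ 𝓝 a0 := Metric.ball_mem_nhds a0 hδ
  have hf0 : ContinuousOn f0 (Metric.ball a0 δ) :=
    hf0lip.continuousOn.mono ((Real.ball_eq_Ioo a0 δ).subset.trans Ioo_subset_Icc_self)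
  have hlimit : IsUnit (f0 a0 • kernelMomentMatrix4 K).det := by
    rw [det_smul]
    exact ((hf0pos a0 ⟨by linarith, by linarith⟩).ne'.isUnit.pow _).mul hS4
  have hD := tendsto_lcMatrix hK hsupp hf0 hball
  have hρ := tendsto_inv_sq_smul_lcResidual hK hsupp hf0 hθ hball
  have hlim := ((tendsto_pi_nhds.1 (hD.matrix_inv_mulVec hlimit
    (hρ.mono_left nhdsWithin_le_nhds)) 2).const_mul 2).const_add (deriv (deriv θ0) a0)
  rw [mulVec_zero, Pi.zero_apply, mul_zero, add_zero] at hlim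
  refine hlim.congr' ?_
  filter_upwards [self_mem_nhdsWithin, hD.eventually_isUnit_det hlimit,
    (eventually_continuousOn_comp_add_mul hθ.continuousOn hball).filter_mono nhdsWithin_le_nhds,
    (eventually_continuousOn_comp_add_mul hf0 hball).filter_mono nhdsWithin_le_nhds]
    with b hb hDb hθb hfb
  exact (lcSecondDeriv_eq_of_lcVector_eq hb.ne' hDb
    (lcVector_eq_mulVec_add_lcResidual hK hsupp hb hθb hfb _)).symm

/-- Consistency of the third-order local polynomial second-derivative functional:
under twice continuous differentiability of `θ0` near `a0` (no more smoothness needed),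
`θ_b^{(2)}(a0) → θ0''(a0)` as `b → 0`. -/
theorem local_cubic_second_derivative_consistency
    (K f0 θ0 : ℝ → ℝ) (a0 δ : ℝ) (hδ : 0 < δ) (LK Lf : NNReal)
    (hKpos : ∀ u, 0 ≤ K u) (hKsymm : ∀ u, K (-u) = K u)
    (hKsupp : ∀ u, 1 < |u| → K u = 0)
    (hKlip : LipschitzWith LK K)
    (hKone : (∫ u, K u) = 1)
    (hS4 : IsUnit (kernelMomentMatrix4 K).det)
    (hf0pos : ∀ a ∈ Set.Icc (a0 - δ) (a0 + δ), 0 < f0 a)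
    (hf0lip : LipschitzOnWith Lf f0 (Set.Icc (a0 - δ) (a0 + δ)))
    (hθ : ContDiffOn ℝ 2 θ0 (Metric.ball a0 δ)) :
    Tendsto (fun b : ℝ => lcSecondDeriv K f0 θ0 a0 b)
      (𝓝[>] 0) (𝓝 (deriv (deriv θ0) a0)) :=
  local_cubic_second_derivative_consistency_general K f0 θ0 a0 δ hδ LK Lf hKsupp hKlip hS4 hf0pos
    hf0lip hθ
end
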